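/- Let G be an ordered context-free grammar and let w be a string having a ≺_G-least parse tree. Then the rules chosen by the oCFG derivation of w (which at each step rewrites the leftmost nonterminal using the first rule, in the production order, that can be extended to a successful derivation of w), applied in order in a leftmost way, produce exactly the ≺_G-least parse tree of w. -/

import Mathlib

namespace Ocfg

/-- A symbol: nonterminal or terminal. -/
inductive Sym (N T : Type) : Type
  | nt : N → Sym N T
  | tm : T → Sym N T

/-- An (ordered) context-free grammar: each nonterminal has an ordered
list of right-hand sides; `start` is the start nonterminal. -/
structure OCFG (N T : Type) : Type where
  prods : N → List (List (Sym N T))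
  start : N

/-- Ordered ranked trees used as parse trees: terminal leaves, ε-leaves,
and internal nodes labelled by a nonterminal together with the index of
the rule applied there. -/
inductive PTree (N T : Type) : Type
  | leaf : T → PTree N T
  | eps  : PTree N T
  | node : N → ℕ → List (PTree N T) → PTree N T

mutual
/-- `ParseFrom G A w t`: `t` is a parse tree with root nonterminal `A`
and yield `w`. -/
inductive ParseFrom {N T : Type} (G : OCFG N T) : N → List T → PTree N T → Prop
  | epsNode (A : N) (i : ℕ) :
      (G.prods A)[i]? = some [] →
      ParseFrom G A [] (PTree.node A i [PTree.eps])
  | node (A : N) (i : ℕ) (r : List (Sym N T)) (w : List T) (cs : List (PTree N T)) :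
      (G.prods A)[i]? = some r → r ≠ [] → ParseSeq G r w cs →
      ParseFrom G A w (PTree.node A i cs)

/-- `ParseSeq G r w cs`: the trees `cs` match, in order, the symbols of `r`,
with concatenated yield `w`. -/
inductive ParseSeq {N T : Type} (G : OCFG N T) : List (Sym N T) → List T → List (PTree N T) → Prop
  | nil : ParseSeq G [] [] []
  | consTm (a : T) (r : List (Sym N T)) (w : List T) (cs : List (PTree N T)) :
      ParseSeq G r w cs →
      ParseSeq G (Sym.tm a :: r) (a :: w) (PTree.leaf a :: cs)
  | consNt (A : N) (t : PTree N T) (wA : List T) (r : List (Sym N T)) (w : List T)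
      (cs : List (PTree N T)) :
      ParseFrom G A wA t → ParseSeq G r w cs →
      ParseSeq G (Sym.nt A :: r) (wA ++ w) (t :: cs)
end

/-- The set `P_G(w)` of parse trees of `w`. -/
def parseTrees {N T : Type} (G : OCFG N T) (w : List T) : Set (PTree N T) :=
  {t | ParseFrom G G.start w t}

/-- `n(t)`: the sequence of rule indices of `t`, in pre-order. -/
def PTree.idxSeq {N T : Type} : PTree N T → List ℕ
  | .leaf _ => []
  | .eps => []
  | .node _ i cs => i :: (cs.attach.map (fun c => PTree.idxSeq c.1)).flatten
decreasing_by
  have := List.sizeOf_lt_of_mem c.2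
  simp_wf
  omega

/-- The order `≺_G` on parse trees: lexicographic comparison of the
pre-order rule-index sequences. -/
def treeLT {N T : Type} (t₁ t₂ : PTree N T) : Prop :=
  List.Lex (· < ·) t₁.idxSeq t₂.idxSeq

/-- One-step derivation relation `⇒` of the underlying CFG. -/
def OCFG.Step {N T : Type} (G : OCFG N T) (u v : List (Sym N T)) : Prop :=
  ∃ (u₁ u₂ : List (Sym N T)) (A : N) (r : List (Sym N T)),
    r ∈ G.prods A ∧ u = u₁ ++ Sym.nt A :: u₂ ∧ v = u₁ ++ r ++ u₂

/-- `⇒*`. -/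
def OCFG.Derives {N T : Type} (G : OCFG N T) : List (Sym N T) → List (Sym N T) → Prop :=
  Relation.ReflTransGen G.Step

/-- A nonterminal is useful if it occurs in some sentential form derivable from
the start symbol and derives some terminal string. -/
def Useful {N T : Type} (G : OCFG N T) (A : N) : Prop :=
  (∃ u₁ u₂ : List (Sym N T), G.Derives [Sym.nt G.start] (u₁ ++ Sym.nt A :: u₂)) ∧
  (∃ w : List T, G.Derives [Sym.nt A] (w.map Sym.tm))

/-- `G` is cyclic if `A ⇒⁺ A` for some nonterminal `A`. -/
def Cyclic {N T : Type} (G : OCFG N T) : Prop :=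
  ∃ A : N, Relation.TransGen G.Step [Sym.nt A] [Sym.nt A]

/-- `G` has no ε-rules. -/
def NoEpsRules {N T : Type} (G : OCFG N T) : Prop :=
  ∀ (A : N) (r : List (Sym N T)), r ∈ G.prods A → r ≠ []

/-- A unit-rule step: `A → B` is a rule of `G`. -/
def UnitStep {N T : Type} (G : OCFG N T) (A B : N) : Prop :=
  [Sym.nt B] ∈ G.prods A

/-- `G` has a cycle of unit rules. -/
def HasUnitCycle {N T : Type} (G : OCFG N T) : Prop :=
  ∃ A : N, Relation.TransGen (UnitStep G) A A

/-- `G` is well-ordered: for every string `w`, every nonempty subset of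
`P_G(w)` has a `≺_G`-least element. -/
def WellOrderedG {N T : Type} (G : OCFG N T) : Prop :=
  ∀ (w : List T) (Φ : Set (PTree N T)), Φ ⊆ parseTrees G w → Φ.Nonempty →
    ∃ t ∈ Φ, ∀ t' ∈ Φ, t = t' ∨ treeLT t t'

/-- `t` is the `≺_G`-least parse tree of `w`. -/
def IsLeastTree {N T : Type} (G : OCFG N T) (w : List T) (t : PTree N T) : Prop :=
  ParseFrom G G.start w t ∧ ∀ t', ParseFrom G G.start w t' → t = t' ∨ treeLT t t'

/-- `G` has least parse trees. -/
def HasLeastTrees {N T : Type} (G : OCFG N T) : Prop :=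
  ∀ w : List T, (parseTrees G w).Nonempty → ∃ t, IsLeastTree G w t

/-- Derivations of a given length (number of steps). -/
inductive DerivesIn {N T : Type} (G : OCFG N T) : List (Sym N T) → List (Sym N T) → ℕ → Prop
  | refl (u : List (Sym N T)) : DerivesIn G u u 0
  | step (u v w : List (Sym N T)) (n : ℕ) :
      G.Step u v → DerivesIn G v w n → DerivesIn G u w (n + 1)

/-- Number of rule applications in a parse tree (= length of the
corresponding leftmost derivation). -/
def PTree.numRules {N T : Type} : PTree N T → ℕ
  | .leaf _ => 0
  | .eps => 0
  | .node _ _ cs => 1 + ((cs.attach.map (fun c => PTree.numRules c.1)).foldr (· + ·) 0)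
decreasing_by
  have := List.sizeOf_lt_of_mem c.2
  simp_wf
  omega

/-- Height of a tree: a single leaf has height 0. -/
def PTree.height {N T : Type} : PTree N T → ℕ
  | .leaf _ => 0
  | .eps => 0
  | .node _ _ cs => 1 + ((cs.attach.map (fun c => PTree.height c.1)).foldr max 0)
decreasing_by
  have := List.sizeOf_lt_of_mem c.2
  simp_wf
  omega

/-- The language of `G`. -/
def langOf {N T : Type} (G : OCFG N T) : Language T :=
  {w | ∃ t, ParseFrom G G.start w t}

end Ocfg

namespace Ocfg

/-- `ODeriv G w u L`: the deterministic oCFG (leftmost) derivation of `w`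
starting from the sentential form `u` succeeds, choosing the rule indices
`L` (in order).  At each step the leftmost nonterminal is rewritten with
the first rule (in production order) whose application can be completed
to a derivation of the full string `w`. -/
inductive ODeriv {N T : Type} (G : OCFG N T) (w : List T) : List (Sym N T) → List ℕ → Prop
  | done : ODeriv G w (w.map Sym.tm) []
  | step (u₁ : List T) (A : N) (u₂ : List (Sym N T)) (i : ℕ) (r : List (Sym N T)) (L : List ℕ) :
      (G.prods A)[i]? = some r →
      ODeriv G w (u₁.map Sym.tm ++ r ++ u₂) L →
      (∀ (j : ℕ) (r' : List (Sym N T)), j < i → (G.prods A)[j]? = some r' →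
        ¬ G.Derives (u₁.map Sym.tm ++ r' ++ u₂) (w.map Sym.tm)) →
      ODeriv G w (u₁.map Sym.tm ++ Sym.nt A :: u₂) (i :: L)

end Ocfg

open Ocfg

/-!
Consider, for a sentential form `u`, the index sequences of all parse forests of `u` with
yield `w`. If `u = v A u₂` with `v` terminal, the forests of `u` whose root rule at `A` is
`r_i` correspond to the forests of `v r_i u₂`, with `i` prepended to the index sequence.
Hence if `i :: L` is the least sequence for `u`, then `L` is the least one for `v r_i u₂`,
and no rule `r_j` with `j < i` can be completed to a derivation of `w`, since that would
give a forest of `u` whose sequence starts with `j`. Induction on the sequence then shows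
that the oCFG derivation follows the least sequence, which for `u = S` is `n(t)`.
-/

theorem List.cons_le_cons_iff_lex {α : Type*} [LinearOrder α] {a b : α} {l l' : List α} :
    a :: l ≤ b :: l' ↔ a < b ∨ a = b ∧ l ≤ l' := by
  rw [le_iff_lt_or_eq, le_iff_lt_or_eq, show a :: l < b :: l' ↔ _ from List.cons_lt_cons_iff,
    List.cons.injEq]
  tauto

namespace Ocfg

variable {N T : Type} {G : OCFG N T}

@[simp]
lemma PTree.idxSeq_leaf (a : T) : (PTree.leaf a : PTree N T).idxSeq = [] := by
  rw [PTree.idxSeq]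

@[simp]
lemma PTree.idxSeq_eps : (PTree.eps : PTree N T).idxSeq = [] := by
  rw [PTree.idxSeq]

@[simp]
lemma PTree.idxSeq_node (A : N) (i : ℕ) (cs : List (PTree N T)) :
    (PTree.node A i cs).idxSeq = i :: cs.flatMap PTree.idxSeq := by
  rw [PTree.idxSeq]
  simp [List.flatMap]

@[simp]
lemma PTree.flatMap_idxSeq_map_leaf (v : List T) :
    (v.map PTree.leaf).flatMap (PTree.idxSeq (N := N)) = [] := by
  simp [List.flatMap_eq_nil_iff]

lemma Sym.eq_map_tm_or_exists_nt (u : List (Sym N T)) :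
    (∃ v : List T, u = v.map Sym.tm) ∨
      ∃ (v : List T) (A : N) (u₂ : List (Sym N T)), u = v.map Sym.tm ++ Sym.nt A :: u₂ := by
  induction u with
  | nil => exact Or.inl ⟨[], rfl⟩
  | cons s u ih =>
    cases s with
    | nt A => exact Or.inr ⟨[], A, u, rfl⟩
    | tm a =>
      rcases ih with ⟨v, rfl⟩ | ⟨v, A, u₂, rfl⟩
      · exact Or.inl ⟨a :: v, rfl⟩
      · exact Or.inr ⟨a :: v, A, u₂, rfl⟩

lemma parseSeq_append_iff {u₁ u₂ : List (Sym N T)} {w : List T} {cs : List (PTree N T)} :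
    ParseSeq G (u₁ ++ u₂) w cs ↔ ∃ w₁ w₂ cs₁ cs₂, w = w₁ ++ w₂ ∧ cs = cs₁ ++ cs₂ ∧
      ParseSeq G u₁ w₁ cs₁ ∧ ParseSeq G u₂ w₂ cs₂ := by
  constructor
  · induction u₁ generalizing w cs with
    | nil => exact fun h => ⟨[], w, [], cs, rfl, rfl, .nil, h⟩
    | cons s u₁ ih =>
      intro h
      cases h with
      | consTm a _ _ _ h =>
        obtain ⟨w₁, w₂, cs₁, cs₂, rfl, rfl, h₁, h₂⟩ := ih h
        exact ⟨a :: w₁, w₂, .leaf a :: cs₁, cs₂, rfl, rfl, .consTm a _ _ _ h₁, h₂⟩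
      | consNt A t wA _ _ _ ht h =>
        obtain ⟨w₁, w₂, cs₁, cs₂, rfl, rfl, h₁, h₂⟩ := ih h
        exact ⟨wA ++ w₁, w₂, t :: cs₁, cs₂, by simp, rfl, .consNt A t wA _ _ _ ht h₁, h₂⟩
  · rintro ⟨w₁, w₂, cs₁, cs₂, rfl, rfl, h₁, h₂⟩
    induction u₁ generalizing w₁ cs₁ with
    | nil => cases h₁; exact h₂
    | cons s u₁ ih =>
      cases h₁ with
      | consTm a _ _ _ h₁ => exact .consTm a _ _ _ (ih _ _ h₁)
      | consNt A t wA _ _ _ ht h₁ =>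
        rw [List.append_assoc]
        exact .consNt A t wA _ _ _ ht (ih _ _ h₁)

lemma parseSeq_map_tm_iff {v w : List T} {cs : List (PTree N T)} :
    ParseSeq G (v.map Sym.tm) w cs ↔ w = v ∧ cs = v.map PTree.leaf := by
  constructor
  · induction v generalizing w cs with
    | nil => rintro ⟨⟩; exact ⟨rfl, rfl⟩
    | cons a v ih =>
      rintro (_ | ⟨_, _, _, _, h⟩)
      obtain ⟨rfl, rfl⟩ := ih h
      exact ⟨rfl, rfl⟩
  · rintro ⟨rfl, rfl⟩
    induction w with
    | nil => exact .nil
    | cons a w ih => exact .consTm a _ _ _ ih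

lemma exists_parseFrom_iff {A : N} {w : List T} {L : List ℕ} :
    (∃ t, ParseFrom G A w t ∧ t.idxSeq = L) ↔ ∃ i r ds, (G.prods A)[i]? = some r ∧
      ParseSeq G r w ds ∧ L = i :: ds.flatMap PTree.idxSeq := by
  constructor
  · rintro ⟨_, ⟨_, i, hi⟩ | ⟨_, i, r, _, ds, hi, -, h⟩, rfl⟩
    · exact ⟨i, [], [], hi, .nil, by simp⟩
    · exact ⟨i, r, ds, hi, h, by simp⟩
  · rintro ⟨i, r, ds, hi, h, rfl⟩
    by_cases hr : r = []
    · subst hr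
      cases h
      exact ⟨_, .epsNode A i hi, by simp⟩
    · exact ⟨_, .node A i r w ds hi hr h, by simp⟩

def forestIdxSeqs (G : OCFG N T) (w : List T) (u : List (Sym N T)) : Set (List ℕ) :=
  {L | ∃ cs, ParseSeq G u w cs ∧ cs.flatMap PTree.idxSeq = L}

lemma mem_forestIdxSeqs_map_tm {v w : List T} {L : List ℕ} :
    L ∈ forestIdxSeqs G w (v.map Sym.tm) ↔ w = v ∧ L = [] := by
  simp only [forestIdxSeqs, Set.mem_ofPred_eq, parseSeq_map_tm_iff]
  constructor
  · rintro ⟨_, ⟨rfl, rfl⟩, rfl⟩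
    simp
  · rintro ⟨rfl, rfl⟩
    exact ⟨_, ⟨rfl, rfl⟩, by simp⟩

lemma mem_forestIdxSeqs_singleton_nt {A : N} {w : List T} {L : List ℕ} :
    L ∈ forestIdxSeqs G w [Sym.nt A] ↔ ∃ t, ParseFrom G A w t ∧ t.idxSeq = L := by
  constructor
  · rintro ⟨_, _ | _ | ⟨_, t, wA, _, _, _, ht, ⟨⟩⟩, rfl⟩
    exact ⟨t, by simpa using ht, by simp⟩
  · rintro ⟨t, ht, rfl⟩
    exact ⟨[t], by simpa using ParseSeq.consNt A t w [] [] [] ht .nil, by simp⟩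

lemma mem_forestIdxSeqs_leftmost_nt {v w : List T} {A : N} {u : List (Sym N T)}
    {L : List ℕ} :
    L ∈ forestIdxSeqs G w (v.map Sym.tm ++ Sym.nt A :: u) ↔ ∃ i r L',
      (G.prods A)[i]? = some r ∧ L' ∈ forestIdxSeqs G w (v.map Sym.tm ++ r ++ u) ∧
        L = i :: L' := by
  simp only [forestIdxSeqs, Set.mem_ofPred_eq, List.append_assoc, parseSeq_append_iff,
    parseSeq_map_tm_iff]
  constructor
  · rintro ⟨_, ⟨_, _, _, _, rfl, rfl, ⟨rfl, rfl⟩, _ | _ | ⟨_, t, wA, _, w₃, es, ht, h⟩⟩, rfl⟩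
    obtain ⟨i, r, ds, hi, hds, hL⟩ := exists_parseFrom_iff.mp ⟨t, ht, rfl⟩
    refine ⟨i, r, _, hi, ⟨_, ⟨_, wA ++ w₃, _, ds ++ es, rfl, rfl, ⟨rfl, rfl⟩,
      wA, w₃, ds, es, rfl, rfl, hds, h⟩, rfl⟩, ?_⟩
    simp [hL]
  · rintro ⟨i, r, _, hi, ⟨_, ⟨_, _, _, _, rfl, rfl, ⟨rfl, rfl⟩,
      wA, w₃, ds, es, rfl, rfl, hds, h⟩, rfl⟩, rfl⟩
    obtain ⟨t, ht, hL⟩ := exists_parseFrom_iff.mpr ⟨i, r, ds, hi, hds, rfl⟩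
    exact ⟨_, ⟨_, wA ++ w₃, _, t :: es, rfl, rfl, ⟨rfl, rfl⟩, .consNt A t wA _ _ _ ht h⟩,
      by simp [hL]⟩

lemma forestIdxSeqs_nonempty_of_derives {u : List (Sym N T)} {w : List T}
    (h : G.Derives u (w.map Sym.tm)) : (forestIdxSeqs G w u).Nonempty := by
  induction h using Relation.ReflTransGen.head_induction_on with
  | refl => exact ⟨[], mem_forestIdxSeqs_map_tm.mpr ⟨rfl, rfl⟩⟩
  | head hstep _ ih =>
    obtain ⟨_, cs, hcs, -⟩ := ih
    obtain ⟨u₁, u₂, A, r, hr, rfl, rfl⟩ := hstep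
    obtain ⟨i, hi⟩ := List.mem_iff_getElem?.mp hr
    simp only [List.append_assoc, parseSeq_append_iff] at hcs
    obtain ⟨w₁, _, cs₁, _, rfl, rfl, h₁, wA, w₃, ds, es, rfl, rfl, hds, h₃⟩ := hcs
    obtain ⟨t, ht, -⟩ := exists_parseFrom_iff.mpr ⟨i, r, ds, hi, hds, rfl⟩
    exact ⟨_, cs₁ ++ t :: es, parseSeq_append_iff.mpr
      ⟨w₁, wA ++ w₃, cs₁, t :: es, rfl, rfl, h₁, .consNt A t wA _ _ _ ht h₃⟩, rfl⟩

theorem oDeriv_of_isLeast_forestIdxSeqs {w : List T} {u : List (Sym N T)} {L : List ℕ}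
    (h : IsLeast (forestIdxSeqs G w u) L) : ODeriv G w u L := by
  rcases Sym.eq_map_tm_or_exists_nt u with ⟨v, rfl⟩ | ⟨v, A, u₂, rfl⟩
  · obtain ⟨rfl, rfl⟩ := mem_forestIdxSeqs_map_tm.mp h.1
    exact .done
  · obtain ⟨i, r, L', hi, hL', rfl⟩ := mem_forestIdxSeqs_leftmost_nt.mp h.1
    have prefixed {j : ℕ} {r' : List (Sym N T)} {L'' : List ℕ} (hj : (G.prods A)[j]? = some r')
        (hL'' : L'' ∈ forestIdxSeqs G w (v.map Sym.tm ++ r' ++ u₂)) :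
        i < j ∨ i = j ∧ L' ≤ L'' :=
      List.cons_le_cons_iff_lex.mp
        (h.2 (mem_forestIdxSeqs_leftmost_nt.mpr ⟨j, r', L'', hj, hL'', rfl⟩))
    have hleast : IsLeast (forestIdxSeqs G w (v.map Sym.tm ++ r ++ u₂)) L' :=
      ⟨hL', fun L'' hL'' => ((prefixed hi hL'').resolve_left (lt_irrefl i)).2⟩
    refine .step v A u₂ i r L' hi (oDeriv_of_isLeast_forestIdxSeqs hleast) ?_
    intro j r' hji hj hderiv
    obtain ⟨L'', hL''⟩ := forestIdxSeqs_nonempty_of_derives hderiv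
    rcases prefixed hj hL'' with hij | ⟨rfl, -⟩ <;> omega
termination_by L.length

lemma isLeast_forestIdxSeqs_of_isLeastTree {w : List T} {t : PTree N T}
    (h : IsLeastTree G w t) : IsLeast (forestIdxSeqs G w [Sym.nt G.start]) t.idxSeq := by
  refine ⟨mem_forestIdxSeqs_singleton_nt.mpr ⟨t, h.1, rfl⟩, ?_⟩
  rintro _ hL
  obtain ⟨t', ht', rfl⟩ := mem_forestIdxSeqs_singleton_nt.mp hL
  rcases h.2 t' ht' with rfl | hlt
  exacts [le_rfl, le_of_lt hlt]

end Ocfg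

/-- If `w` has a `≺_G`-least parse tree `t`, then the oCFG
derivation of `w` (the deterministic leftmost derivation choosing at each step
the first rule completable to a derivation of `w`) uses exactly the rules of
`t`, in pre-order: its index sequence is `n(t)`. -/
theorem stmt12 {N T : Type} (G : OCFG N T) (w : List T) (t : PTree N T)
    (hleast : IsLeastTree G w t) :
    ODeriv G w [Sym.nt G.start] t.idxSeq :=
  oDeriv_of_isLeast_forestIdxSeqs (isLeast_forestIdxSeqs_of_isLeastTree hleast)
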